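/- (Higher-order boundary Schwarz Lemma) Let f be holomorphic on the open unit disk D with |f(z)| < 1 on D, let k ≥ 1, and suppose the Taylor coefficients of f at 0 satisfy a₀ = a₁ = ⋯ = a_{k−1} = 0. Suppose further that for some b with |b| = 1, f extends continuously to b, |f(b)| = 1, and f'(b) exists. Then |f'(b)| ≥ k + (1 − |a_k|)/(1 + |a_k|). -/

import Mathlib

/-!
Iterating `dslope` at the origin divides out the zero of order `k`: `f z = z ^ k * g z` with `g`
a holomorphic self-map of the closed disc and `g 0 = aₖ`. The Schwarz–Pick lemma for `g` gives
`‖f z‖ ≤ φ ‖z‖` with `φ r = r ^ k * (‖aₖ‖ + r) / (1 + ‖aₖ‖ * r)`. Since `φ 1 = 1 = ‖f b‖`, the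
difference quotients of `f` at `b` along the radius dominate the slopes of `φ` at `1`, whence
`‖f' b‖ ≥ φ' 1 = k + (1 - ‖aₖ‖) / (1 + ‖aₖ‖)`.
-/

open Complex ComplexConjugate Filter Function Metric Set Topology

section IterateDslope

theorem AnalyticAt.iterate_dslope_self {𝕜 : Type*} [NontriviallyNormedField 𝕜] [CompleteSpace 𝕜]
    [CharZero 𝕜] {f : 𝕜 → 𝕜} {a : 𝕜} (hf : AnalyticAt 𝕜 f a) (n : ℕ) :
    (swap dslope a)^[n] f a = iteratedDeriv n f a / n.factorial := by
  rw [← (hf.hasFPowerSeriesAt.has_fpower_series_iterate_dslope_fslope n).coeff_zero 1,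
    ← FormalMultilinearSeries.coeff, FormalMultilinearSeries.coeff_iterate_fslope, zero_add,
    FormalMultilinearSeries.coeff_ofScalars]

variable {E : Type*} [NormedAddCommGroup E] [NormedSpace ℂ E] [CompleteSpace E]
  {f : ℂ → E}

theorem differentiableOn_iterate_dslope {s : Set ℂ} {a : ℂ} (hs : s ∈ 𝓝 a)
    (hf : DifferentiableOn ℂ f s) (n : ℕ) : DifferentiableOn ℂ ((swap dslope a)^[n] f) s := by
  induction n with
  | zero => exact hf
  | succ n ih => rw [iterate_succ_apply']; exact (differentiableOn_dslope hs).2 ih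

theorem mapsTo_iterate_dslope_zero {n : ℕ} (hf : DifferentiableOn ℂ f (ball 0 1))
    (hmaps : MapsTo f (ball 0 1) (closedBall 0 1))
    (hzero : ∀ j < n, (swap dslope 0)^[j] f 0 = 0) :
    MapsTo ((swap dslope 0)^[n] f) (ball 0 1) (closedBall 0 1) := by
  induction n with
  | zero => exact hmaps
  | succ n ih =>
    intro z hz
    have hmaps_n := ih fun j hj ↦ hzero j (by omega)
    rw [← hzero n n.lt_succ_self] at hmaps_n
    simpa [iterate_succ_apply'] using norm_dslope_le_div_of_mapsTo_ball
      (differentiableOn_iterate_dslope (ball_mem_nhds 0 one_pos) hf n) hmaps_n hz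

end IterateDslope

section SchwarzPick

theorem normSq_one_sub_conj_mul_sub_normSq_sub (c w : ℂ) :
    normSq (1 - conj c * w) - normSq (w - c) = (1 - normSq c) * (1 - normSq w) := by
  simp only [normSq_apply, sub_re, sub_im, mul_re, mul_im, one_re, one_im, conj_re, conj_im]
  ring

theorem norm_sub_le_norm_one_sub_conj_mul {c w : ℂ} (hc : ‖c‖ ≤ 1) (hw : ‖w‖ ≤ 1) :
    ‖w - c‖ ≤ ‖1 - conj c * w‖ := by
  rw [← sq_le_sq₀ (norm_nonneg _) (norm_nonneg _), ← normSq_eq_norm_sq, ← normSq_eq_norm_sq]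
  have := normSq_one_sub_conj_mul_sub_normSq_sub c w
  have : 0 ≤ (1 - normSq c) * (1 - normSq w) := by
    rw [normSq_eq_norm_sq, normSq_eq_norm_sq]
    exact mul_nonneg (by nlinarith [norm_nonneg c]) (by nlinarith [norm_nonneg w])
  linarith

theorem one_sub_conj_mul_ne_zero {c w : ℂ} (hc : ‖c‖ < 1) (hw : ‖w‖ ≤ 1) :
    1 - conj c * w ≠ 0 := by
  rw [sub_ne_zero]
  intro h
  have : ‖conj c * w‖ < 1 := by
    rw [norm_mul, norm_conj]
    exact mul_lt_one_of_nonneg_of_lt_one_left (norm_nonneg c) hc hw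
  simp [← h] at this

variable {g : ℂ → ℂ} {z : ℂ}

/-- The Schwarz lemma applied to `g` followed by the disc automorphism moving `g 0` to `0`. -/
theorem norm_sub_le_mul_norm_one_sub_conj_mul (hg : DifferentiableOn ℂ g (ball 0 1))
    (hmaps : MapsTo g (ball 0 1) (closedBall 0 1)) (hg0 : ‖g 0‖ < 1) (hz : z ∈ ball 0 1) :
    ‖g z - g 0‖ ≤ ‖z‖ * ‖1 - conj (g 0) * g z‖ := by
  have hg1 : ∀ w ∈ ball (0 : ℂ) 1, ‖g w‖ ≤ 1 := fun w hw ↦ mem_closedBall_zero_iff.1 (hmaps hw)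
  have hden : ∀ w ∈ ball (0 : ℂ) 1, 1 - conj (g 0) * g w ≠ 0 :=
    fun w hw ↦ one_sub_conj_mul_ne_zero hg0 (hg1 w hw)
  set H : ℂ → ℂ := fun w ↦ (g w - g 0) / (1 - conj (g 0) * g w)
  have hH : DifferentiableOn ℂ H (ball 0 1) :=
    (hg.sub_const _).div ((differentiableOn_const 1).sub (hg.const_mul _)) hden
  have hHmaps : MapsTo H (ball 0 1) (closedBall 0 1) := fun w hw ↦ by
    rw [mem_closedBall_zero_iff, norm_div]
    exact div_le_one_of_le₀ (norm_sub_le_norm_one_sub_conj_mul hg0.le (hg1 w hw)) (norm_nonneg _)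
  have hH0 : H 0 = 0 := by simp [H]
  have := norm_le_norm_of_mapsTo_ball hH hHmaps hH0 (mem_ball_zero_iff.1 hz)
  rwa [norm_div, div_le_iff₀ (norm_pos_iff.2 (hden z hz))] at this

theorem mul_one_add_mul_le_add_of_sq_le {u c t : ℝ} (hu : 0 ≤ u) (hu1 : u ≤ 1) (hc1 : c ≤ 1)
    (ht : 0 ≤ t) (h : (1 - t ^ 2) * (1 - c * u) ^ 2 ≤ (1 - c ^ 2) * (1 - u ^ 2)) :
    u * (1 + c * t) ≤ c + t := by
  -- `(1 - c * u) ^ 2 - (u - c) ^ 2 = (1 - c ^ 2) * (1 - u ^ 2)`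
  have hsq : (u - c) ^ 2 ≤ (t * (1 - c * u)) ^ 2 := by linear_combination h
  have := (abs_le_of_sq_le_sq' hsq (mul_nonneg ht (by nlinarith))).2
  linarith

theorem norm_le_div_of_mapsTo_ball (hg : DifferentiableOn ℂ g (ball 0 1))
    (hmaps : MapsTo g (ball 0 1) (closedBall 0 1)) (hz : z ∈ ball 0 1) :
    ‖g z‖ ≤ (‖g 0‖ + ‖z‖) / (1 + ‖g 0‖ * ‖z‖) := by
  have hgz : ‖g z‖ ≤ 1 := mem_closedBall_zero_iff.1 (hmaps hz)
  have hg0 : ‖g 0‖ ≤ 1 := mem_closedBall_zero_iff.1 (hmaps (mem_ball_self one_pos))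
  have hz1 : ‖z‖ < 1 := mem_ball_zero_iff.1 hz
  rcases hg0.eq_or_lt with hg0 | hg0
  · rwa [hg0, one_mul, div_self (by positivity)]
  rw [le_div_iff₀ (by positivity)]
  refine mul_one_add_mul_le_add_of_sq_le (norm_nonneg _) hgz hg0.le (norm_nonneg _) ?_
  have hschwarz := norm_sub_le_mul_norm_one_sub_conj_mul hg hmaps hg0 hz
  have hid := normSq_one_sub_conj_mul_sub_normSq_sub (g 0) (g z)
  simp only [normSq_eq_norm_sq] at hid
  have hlow : 1 - ‖g 0‖ * ‖g z‖ ≤ ‖1 - conj (g 0) * g z‖ := by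
    simpa using norm_sub_norm_le (1 : ℂ) (conj (g 0) * g z)
  have hlow0 : 0 ≤ 1 - ‖g 0‖ * ‖g z‖ := by nlinarith [norm_nonneg (g 0), norm_nonneg (g z)]
  calc (1 - ‖z‖ ^ 2) * (1 - ‖g 0‖ * ‖g z‖) ^ 2
      ≤ (1 - ‖z‖ ^ 2) * ‖1 - conj (g 0) * g z‖ ^ 2 := by gcongr; nlinarith [norm_nonneg z]
    _ ≤ ‖1 - conj (g 0) * g z‖ ^ 2 - ‖g z - g 0‖ ^ 2 := by
        nlinarith [mul_self_le_mul_self (norm_nonneg _) hschwarz]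
    _ = (1 - ‖g 0‖ ^ 2) * (1 - ‖g z‖ ^ 2) := hid

end SchwarzPick

theorem norm_le_pow_mul_of_iteratedDeriv_eq_zero {f : ℂ → ℂ} {k : ℕ} {z : ℂ}
    (hf : DifferentiableOn ℂ f (ball 0 1)) (hmaps : MapsTo f (ball 0 1) (closedBall 0 1))
    (hzero : ∀ n < k, iteratedDeriv n f 0 = 0) (hz : z ∈ ball 0 1) :
    ‖f z‖ ≤ ‖z‖ ^ k * ((‖iteratedDeriv k f 0 / k.factorial‖ + ‖z‖) /
      (1 + ‖iteratedDeriv k f 0 / k.factorial‖ * ‖z‖)) := by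
  have ha : AnalyticAt ℂ f 0 := hf.analyticAt (ball_mem_nhds 0 one_pos)
  have hdslope : ∀ n < k, (swap dslope 0)^[n] f 0 = 0 := fun n hn ↦ by
    rw [ha.iterate_dslope_self, hzero n hn, zero_div]
  have hfactor : f z = z ^ k * (swap dslope 0)^[k] f z := by
    simpa using (pow_sub_smul_iterate_dslope_of_zero k hdslope z).symm
  rw [hfactor, norm_mul, norm_pow, ← ha.iterate_dslope_self]
  gcongr
  exact norm_le_div_of_mapsTo_ball (differentiableOn_iterate_dslope (ball_mem_nhds 0 one_pos) hf k)
    (mapsTo_iterate_dslope_zero hf hmaps hdslope) hz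

theorem hasDerivAt_pow_mul_div_one_add_mul (k : ℕ) {c : ℝ} (hc : 1 + c ≠ 0) :
    HasDerivAt (fun r : ℝ ↦ r ^ k * ((c + r) / (1 + c * r))) (k + (1 - c) / (1 + c)) 1 := by
  have hden : 1 + c * 1 ≠ 0 := by rwa [mul_one]
  refine ((hasDerivAt_pow k (1 : ℝ)).fun_mul (((hasDerivAt_id' (1 : ℝ)).const_add c).fun_div
    (((hasDerivAt_id' (1 : ℝ)).const_mul c).const_add 1) hden)).congr_deriv ?_
  simp only [one_pow, mul_one, add_comm c 1, div_self hc]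
  field_simp

theorem le_norm_of_tendsto_slope_of_norm_le {f : ℂ → ℂ} {b fb' : ℂ} {φ : ℝ → ℝ} {d : ℝ}
    (hb : ‖b‖ = 1) (hfb : ‖f b‖ = 1)
    (hderiv : Tendsto (fun z ↦ (f z - f b) / (z - b)) (𝓝[ball 0 1] b) (𝓝 fb'))
    (hφ : HasDerivAt φ d 1) (hφ1 : φ 1 = 1) (hbound : ∀ r ∈ Ioo (0 : ℝ) 1, ‖f (r * b)‖ ≤ φ r) :
    d ≤ ‖fb'‖ := by
  have hradial : Tendsto (fun r : ℝ ↦ (r : ℂ) * b) (𝓝[<] 1) (𝓝[ball 0 1] b) := by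
    refine tendsto_nhdsWithin_iff.2 ⟨?_, ?_⟩
    · simpa using ((continuous_ofReal.mul continuous_const).tendsto (1 : ℝ)
        (f := fun r : ℝ ↦ (r : ℂ) * b)).mono_left nhdsWithin_le_nhds
    · filter_upwards [Ioo_mem_nhdsLT zero_lt_one] with r hr
      simp [hb, abs_of_pos hr.1, hr.2]
  have hslope : Tendsto (slope φ 1) (𝓝[<] 1) (𝓝 d) :=
    hφ.tendsto_slope.mono_left (nhdsWithin_mono _ fun r hr ↦ ne_of_lt hr)
  refine le_of_tendsto_of_tendsto hslope (hderiv.comp hradial).norm ?_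
  filter_upwards [Ioo_mem_nhdsLT zero_lt_one] with r hr
  have hdist : ‖(r : ℂ) * b - b‖ = 1 - r := by
    rw [← sub_one_mul, norm_mul, hb, mul_one, ← ofReal_one, ← ofReal_sub, norm_real,
      Real.norm_of_nonpos (by linarith [hr.2]), neg_sub]
  rw [slope_def_field, hφ1, ← neg_div_neg_eq, neg_sub, neg_sub, comp_apply, norm_div, hdist]
  gcongr
  · linarith [hr.2]
  calc 1 - φ r ≤ ‖f b‖ - ‖f (r * b)‖ := by linarith [hbound r hr]
    _ ≤ ‖f (r * b) - f b‖ := by rw [norm_sub_rev]; exact norm_sub_norm_le _ _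

theorem higher_order_boundary_schwarz_general
    (f : ℂ → ℂ) (k : ℕ) (b fb' : ℂ)
    (ha : DifferentiableOn ℂ f {z : ℂ | ‖z‖ < 1})
    (hb : ∀ z : ℂ, ‖z‖ < 1 → ‖f z‖ < 1)
    (hcoeff : ∀ n < k, iteratedDeriv n f 0 / (Nat.factorial n : ℂ) = 0)
    (hbmod : ‖b‖ = 1)
    (hfb : ‖f b‖ = 1)
    (hderiv : Tendsto (fun z => (f z - f b) / (z - b))
      (nhdsWithin b {z : ℂ | ‖z‖ < 1}) (nhds fb')) :
    (k : ℝ) + (1 - ‖iteratedDeriv k f 0 / (Nat.factorial k : ℂ)‖) /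
        (1 + ‖iteratedDeriv k f 0 / (Nat.factorial k : ℂ)‖) ≤
      ‖fb'‖ := by
  rw [← ball_zero_eq] at ha hderiv
  have hmaps : MapsTo f (ball 0 1) (closedBall 0 1) := fun z hz ↦
    mem_closedBall_zero_iff.2 (hb z (mem_ball_zero_iff.1 hz)).le
  have hzero : ∀ n < k, iteratedDeriv n f 0 = 0 := fun n hn ↦ by
    simpa [Nat.factorial_ne_zero] using hcoeff n hn
  have hc : 1 + ‖iteratedDeriv k f 0 / (Nat.factorial k : ℂ)‖ ≠ 0 := by positivity
  refine le_norm_of_tendsto_slope_of_norm_le hbmod hfb hderiv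
    (hasDerivAt_pow_mul_div_one_add_mul k hc)
    (by rw [one_pow, one_mul, mul_one, add_comm, div_self hc]) fun r hr ↦ ?_
  have hrb : ‖(r : ℂ) * b‖ = r := by simp [hbmod, abs_of_pos hr.1]
  simpa only [hrb] using norm_le_pow_mul_of_iteratedDeriv_eq_zero ha hmaps hzero
    (mem_ball_zero_iff.2 (hrb.trans_lt hr.2))

/-- **Higher-order boundary Schwarz Lemma.** Let `f` be holomorphic on the unit disk
with `|f| < 1` there, `k ≥ 1`, with Taylor coefficients `aₙ = f⁽ⁿ⁾(0)/n!` vanishing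
for `n < k`. If `f` extends continuously to a boundary point `b` with `|f b| = 1` and
has derivative `fb'` at `b` (as a limit within the disk), then
`|f'(b)| ≥ k + (1 - |aₖ|) / (1 + |aₖ|)`. -/
theorem higher_order_boundary_schwarz
    (f : ℂ → ℂ) (k : ℕ) (hk : 1 ≤ k) (b fb' : ℂ)
    (ha : DifferentiableOn ℂ f {z : ℂ | ‖z‖ < 1})
    (hb : ∀ z : ℂ, ‖z‖ < 1 → ‖f z‖ < 1)
    (hcoeff : ∀ n < k, iteratedDeriv n f 0 / (Nat.factorial n : ℂ) = 0)
    (hbmod : ‖b‖ = 1)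
    (hcont : ContinuousWithinAt f ({z : ℂ | ‖z‖ < 1} ∪ {b}) b)
    (hfb : ‖f b‖ = 1)
    (hderiv : Tendsto (fun z => (f z - f b) / (z - b))
      (nhdsWithin b {z : ℂ | ‖z‖ < 1}) (nhds fb')) :
    (k : ℝ) + (1 - ‖iteratedDeriv k f 0 / (Nat.factorial k : ℂ)‖) /
        (1 + ‖iteratedDeriv k f 0 / (Nat.factorial k : ℂ)‖) ≤
      ‖fb'‖ :=
  higher_order_boundary_schwarz_general f k b fb' ha hb hcoeff hbmod hfb hderiv
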